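/- Let k ≥ 2 and let G be a k-uniform hypergraph with n vertices and maximum degree Δ ≥ 1. Set N = 10k²nΔ. Then for every function f : E(K_N^(k)) → E(K_N^(k)) (mapping k-sets of [N] to k-sets of [N]) satisfying f(e) ∩ e = ∅ for every k-set e, there exists an injective map φ : V(G) → [N] such that for every edge e of G, f(φ(e)) ∩ φ(V(G)) = ∅. -/

import Mathlib

/-!
Choose `φ : V → [N]` uniformly at random. The bad events are the collisions `φ u = φ v` and,
for each edge `e` and vertex `w ∉ e`, the event `φ w ∈ f (φ e)`. Each depends only on the values
of `φ` at the vertices involved, and has probability at most `1/N`, resp. `k/N`: once `φ` is fixed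
off `w`, the value `φ w` has to hit a fixed set of size at most `k`. An event shares a vertex with
at most `2n` resp. `(k+1)n` collision events and `2(nΔ + |E|)` resp. `(k+1)(nΔ + |E|)` edge
events, where `k|E| ≤ nΔ`. So the asymmetric Lovász local lemma with weights `9/(100kn)` and
`3/(7(k+1)nΔ)` applies when `N ≥ 10k²nΔ`. A map avoiding all bad events is injective and has
`f (φ e) ∩ φ(V) = ∅`: for `w ∈ e` this is the hypothesis `f (φ e) ∩ φ e = ∅`. The local lemma
itself is proved by counting on the finite product space `V → [N]`.
-/

open Finset

section LocalLemma

variable {Ω ι : Type*} [Fintype Ω] [DecidableEq Ω] (A : ι → Finset Ω) (x : ι → ℝ)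

def avoiding (S : Finset ι) : Finset Ω := {ω | ∀ j ∈ S, ω ∉ A j}

variable {A}

@[simp]
lemma mem_avoiding {S : Finset ι} {ω : Ω} : ω ∈ avoiding A S ↔ ∀ j ∈ S, ω ∉ A j := by
  simp [avoiding]

@[simp]
lemma avoiding_empty : avoiding A (∅ : Finset ι) = univ := by
  ext; simp

lemma avoiding_anti {S T : Finset ι} (h : S ⊆ T) : avoiding A T ⊆ avoiding A S := by
  intro ω; simp only [mem_avoiding]; exact fun hω j hj => hω j (h hj)

variable [DecidableEq ι]

lemma avoiding_insert (j : ι) (S : Finset ι) :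
    avoiding A (insert j S) = avoiding A S \ A j := by
  ext; simp [and_comm]

lemma one_sub_mul_card_avoiding_le_card_avoiding_insert {a : ι} {S : Finset ι} {y : ℝ}
    (h : (#(A a ∩ avoiding A S) : ℝ) ≤ y * #(avoiding A S)) :
    (1 - y) * #(avoiding A S) ≤ #(avoiding A (insert a S)) := by
  have hsplit := card_sdiff_add_card_inter (avoiding A S) (A a)
  rw [inter_comm] at h
  rw [avoiding_insert, ← hsplit]
  rw [← hsplit] at h
  push_cast at h ⊢
  linarith

lemma prod_one_sub_mul_card_avoiding_le (U T : Finset ι) (hx : ∀ j ∈ T, x j ≤ 1)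
    (h : ∀ a ∈ T, ∀ T' ⊆ T.erase a,
      (#(A a ∩ avoiding A (U ∪ T')) : ℝ) ≤ x a * #(avoiding A (U ∪ T'))) :
    (∏ j ∈ T, (1 - x j)) * #(avoiding A U) ≤ #(avoiding A (U ∪ T)) := by
  induction T using Finset.induction_on with
  | empty => simp
  | insert a T haT ih =>
    have ih' := ih (fun j hj => hx j (mem_insert_of_mem hj)) fun b hb T' hT' =>
      h b (mem_insert_of_mem hb) T' (hT'.trans (erase_subset_erase _ (subset_insert _ _)))
    have hstep := one_sub_mul_card_avoiding_le_card_avoiding_insert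
      (h a (mem_insert_self a T) T (by simp [haT]))
    rw [prod_insert haT, mul_assoc, union_insert]
    exact (mul_le_mul_of_nonneg_left ih' (by linarith [hx a (mem_insert_self a T)])).trans hstep

variable {I : Finset ι} {Γ : ι → Finset ι}

theorem card_inter_avoiding_le (hx0 : ∀ i, 0 ≤ x i) (hx1 : ∀ i, x i ≤ 1)
    (h : ∀ i ∈ I, ∀ S ⊆ I, i ∉ S → Disjoint S (Γ i) →
      (#(A i ∩ avoiding A S) : ℝ) ≤ x i * (∏ j ∈ Γ i, (1 - x j)) * #(avoiding A S))
    (S : Finset ι) (hSI : S ⊆ I) {i : ι} (hi : i ∈ I) :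
    (#(A i ∩ avoiding A S) : ℝ) ≤ x i * #(avoiding A S) := by
  induction S using Finset.strongInduction generalizing i with
  | H S ih =>
  by_cases hiS : i ∈ S
  · have : A i ∩ avoiding A S = ∅ :=
      eq_empty_of_forall_notMem fun ω hω => (mem_avoiding.1 (mem_inter.1 hω).2) i hiS
        (mem_inter.1 hω).1
    rw [this, card_empty, Nat.cast_zero]
    exact mul_nonneg (hx0 i) (Nat.cast_nonneg _)
  have hpeel := prod_one_sub_mul_card_avoiding_le x (S \ Γ i) (S ∩ Γ i) (fun j _ => hx1 j)
    fun a ha T' hT' => by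
      have haS := (mem_inter.1 ha).1
      have hsub : S \ Γ i ∪ T' ⊆ S.erase a := by
        intro j hj
        rcases mem_union.1 hj with hj | hj
        · exact mem_erase.2 ⟨fun hja => (mem_sdiff.1 hj).2 (hja ▸ (mem_inter.1 ha).2),
            (mem_sdiff.1 hj).1⟩
        · exact erase_subset_erase a inter_subset_left (hT' hj)
      exact ih _ (hsub.trans_ssubset (erase_ssubset haS))
        ((hsub.trans (erase_subset a S)).trans hSI) (hSI haS)
  rw [sdiff_union_inter] at hpeel
  have hprod : ∏ j ∈ Γ i, (1 - x j) ≤ ∏ j ∈ S ∩ Γ i, (1 - x j) :=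
    prod_le_prod_of_subset_of_le_one inter_subset_right (fun j _ => by linarith [hx1 j])
      fun j _ _ => by linarith [hx0 j]
  calc (#(A i ∩ avoiding A S) : ℝ) ≤ #(A i ∩ avoiding A (S \ Γ i)) := by
        gcongr; exact avoiding_anti sdiff_subset
    _ ≤ x i * (∏ j ∈ Γ i, (1 - x j)) * #(avoiding A (S \ Γ i)) :=
        h i hi _ (sdiff_subset.trans hSI) (fun h => hiS (mem_sdiff.1 h).1) sdiff_disjoint
    _ ≤ x i * ((∏ j ∈ S ∩ Γ i, (1 - x j)) * #(avoiding A (S \ Γ i))) := by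
        rw [← mul_assoc]; gcongr; exact hx0 i
    _ ≤ x i * #(avoiding A S) := mul_le_mul_of_nonneg_left hpeel (hx0 i)

/-- **Lovász local lemma**, asymmetric form, counted on a finite uniform space. -/
theorem avoiding_nonempty [Nonempty Ω] (hx0 : ∀ i, 0 ≤ x i) (hx1 : ∀ i, x i < 1)
    (h : ∀ i ∈ I, ∀ S ⊆ I, i ∉ S → Disjoint S (Γ i) →
      (#(A i ∩ avoiding A S) : ℝ) ≤ x i * (∏ j ∈ Γ i, (1 - x j)) * #(avoiding A S)) :
    (avoiding A I).Nonempty := by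
  have hpeel := prod_one_sub_mul_card_avoiding_le x ∅ I (fun j _ => (hx1 j).le)
    fun a ha T' hT' => by
      simpa using card_inter_avoiding_le x hx0 (fun j => (hx1 j).le) h T'
        (hT'.trans (erase_subset a I)) ha
  rw [avoiding_empty, empty_union, card_univ] at hpeel
  have hpos : (0 : ℝ) < (∏ j ∈ I, (1 - x j)) * Fintype.card Ω :=
    mul_pos (prod_pos fun j _ => by linarith [hx1 j]) (by exact_mod_cast Fintype.card_pos)
  exact card_pos.1 (by exact_mod_cast hpos.trans_le hpeel)

end LocalLemma

section ProductSpace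

open Function

variable {V β : Type*} [Fintype V] [DecidableEq V] [Fintype β] [DecidableEq β]

lemma card_inter_mul_card_eq {T U : Finset V} (hTU : Disjoint T U) {A B : Finset (V → β)}
    (hA : DependsOn (· ∈ A) (T : Set V)) (hB : DependsOn (· ∈ B) (U : Set V)) :
    #(A ∩ B) * Fintype.card (V → β) = #A * #B := by
  have agree_left (ψ χ : V → β) : ∀ v ∈ (T : Set V), T.piecewise ψ χ v = ψ v :=
    fun v hv => piecewise_eq_of_mem _ _ _ hv
  have agree_right (ψ χ : V → β) : ∀ v ∈ (U : Set V), T.piecewise ψ χ v = χ v :=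
    fun v hv => piecewise_eq_of_notMem _ _ _ (disjoint_right.1 hTU hv)
  -- swapping the `T`-coordinates of two outcomes is an involution carrying
  -- `(A ∩ B) × (V → β)` onto `A × B`
  have swap_swap (ψ χ : V → β) :
      T.piecewise (T.piecewise ψ χ) (T.piecewise χ ψ) = ψ := by
    ext v; by_cases hv : v ∈ T <;> simp [hv]
  rw [← card_univ, ← card_product, ← card_product]
  refine card_nbij' (fun p => (T.piecewise p.1 p.2, T.piecewise p.2 p.1))
    (fun p => (T.piecewise p.1 p.2, T.piecewise p.2 p.1)) ?_ ?_ ?_ ?_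
  · rintro ⟨ψ, χ⟩ hp
    simp only [coe_product, Set.mem_prod, coe_inter, Set.mem_inter_iff, mem_coe] at hp ⊢
    exact ⟨(hA (agree_left ψ χ)).mpr hp.1.1, (hB (agree_right χ ψ)).mpr hp.1.2⟩
  · rintro ⟨ψ, χ⟩ hp
    simp only [coe_product, Set.mem_prod, coe_inter, Set.mem_inter_iff, mem_coe] at hp ⊢
    exact ⟨⟨(hA (agree_left ψ χ)).mpr hp.1, (hB (agree_right ψ χ)).mpr hp.2⟩, mem_univ _⟩
  · rintro ⟨ψ, χ⟩ -
    simp only [swap_swap]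
  · rintro ⟨ψ, χ⟩ -
    simp only [swap_swap]

lemma card_filter_apply_mem_mul_le {F : (V → β) → Finset β} {k : ℕ} (w : V)
    (hF : DependsOn F ({w}ᶜ : Set V)) (hk : ∀ ω, #(F ω) ≤ k) :
    #{ω | ω w ∈ F ω} * Fintype.card β ≤ k * Fintype.card (V → β) := by
  have hFupdate (ω : V → β) (b : β) : F (update ω w b) = F ω :=
    hF fun v hv => update_of_ne hv _ _
  -- `(ω, b) ↦ (ω[w ↦ b], ω w)` is an involution exchanging the two conditions below
  calc #{ω | ω w ∈ F ω} * Fintype.card β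
      = #{p : (V → β) × β | p.1 w ∈ F p.1} := by
        rw [← card_univ, ← card_product]
        congr 1; ext; simp
    _ = #{p : (V → β) × β | p.2 ∈ F p.1} := by
        refine card_nbij' (fun p => (update p.1 w p.2, p.1 w))
          (fun p => (update p.1 w p.2, p.1 w)) ?_ ?_ ?_ ?_ <;>
          rintro ⟨ω, b⟩ hp <;> simp_all
    _ = ∑ ω, #(F ω) := by
        rw [card_filter, Fintype.sum_prod_type]
        simp_rw [← card_filter, filter_univ_mem]
    _ ≤ k * Fintype.card (V → β) := by
        rw [mul_comm, ← smul_eq_mul, ← card_univ]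
        exact sum_le_card_nsmul _ _ _ fun ω _ => hk ω

lemma dependsOn_mem_avoiding {ι : Type*} {A : ι → Finset (V → β)} {vars : ι → Finset V}
    (hA : ∀ i, DependsOn (· ∈ A i) (vars i : Set V)) (S : Finset ι) :
    DependsOn (· ∈ avoiding A S) ((S.biUnion vars : Finset V) : Set V) := by
  intro ω ω' h
  simp only [mem_avoiding, eq_iff_iff]
  refine forall₂_congr fun j hj => not_congr (hA j fun v hv => h v ?_).to_iff
  exact mem_biUnion.2 ⟨j, hj, hv⟩

/-- **Lovász local lemma**, variable version. -/
theorem avoiding_nonempty_of_dependsOn [Nonempty β] {ι : Type*} [DecidableEq ι]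
    {A : ι → Finset (V → β)} {vars : ι → Finset V}
    (hA : ∀ i, DependsOn (· ∈ A i) (vars i : Set V)) {I : Finset ι} {Γ : ι → Finset ι}
    (hΓ : ∀ i ∈ I, ∀ j ∈ I, ¬Disjoint (vars i) (vars j) → j ∈ Γ i)
    (x : ι → ℝ) (hx0 : ∀ i, 0 ≤ x i) (hx1 : ∀ i, x i < 1)
    (hbound : ∀ i ∈ I, (#(A i) : ℝ) ≤ x i * (∏ j ∈ Γ i, (1 - x j)) * Fintype.card (V → β)) :
    (avoiding A I).Nonempty := by
  refine avoiding_nonempty (Γ := Γ) x hx0 hx1 fun i hi S hSI _ hSΓ => ?_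
  have hdisj : Disjoint (vars i) (S.biUnion vars) :=
    (disjoint_biUnion_right _ _ _).2 fun j hj => by_contra fun h =>
      disjoint_left.1 hSΓ hj (hΓ i hi j (hSI hj) h)
  have hindep : (#(A i ∩ avoiding A S) : ℝ) * Fintype.card (V → β) =
      #(A i) * #(avoiding A S) := by
    exact_mod_cast card_inter_mul_card_eq hdisj (hA i) (dependsOn_mem_avoiding hA S)
  have hΩ : (0 : ℝ) < Fintype.card (V → β) := by exact_mod_cast Fintype.card_pos
  refine le_of_mul_le_mul_right ?_ hΩ
  rw [hindep, mul_right_comm]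
  exact mul_le_mul_of_nonneg_right (hbound i hi) (Nat.cast_nonneg _)

end ProductSpace

section Weights

lemma one_sub_mul_pow_le_one_sub_pow {x : ℝ} {m r g : ℕ} (hx0 : 0 ≤ x) (hx1 : x ≤ 1)
    (hmx : m * x ≤ 1) (hg : g ≤ m * r) : (1 - m * x) ^ r ≤ (1 - x) ^ g := by
  have bernoulli : 1 - m * x ≤ (1 - x) ^ m := by
    simpa [sub_eq_add_neg] using one_add_mul_le_pow (a := -x) (by linarith) m
  calc (1 - m * x) ^ r ≤ ((1 - x) ^ m) ^ r := pow_le_pow_left₀ (by linarith) bernoulli r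
    _ = (1 - x) ^ (m * r) := (pow_mul _ _ _).symm
    _ ≤ (1 - x) ^ g := pow_le_pow_of_le_one (by linarith) (by linarith) hg

/-- With `edgeWeight`, the weights of the local lemma for a collision event and for an event
`φ w ∈ f (φ e)`, where `n = |V|`; the constants are tuned so that `one_le_collisionWeight_mul`
and `le_edgeWeight_mul` hold for `N = 10k²nΔ`. -/
noncomputable def collisionWeight (k n : ℕ) : ℝ := 9 / (100 * k * n)

noncomputable def edgeWeight (k n Δ : ℕ) : ℝ := 3 / (7 * (k + 1) * n * Δ)

variable {k n Δ N : ℕ}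

lemma collisionWeight_nonneg : 0 ≤ collisionWeight k n := by
  unfold collisionWeight; positivity

lemma edgeWeight_nonneg : 0 ≤ edgeWeight k n Δ := by
  unfold edgeWeight; positivity

lemma mul_collisionWeight (hk : 0 < k) (hn : 0 < n) :
    n * collisionWeight k n = 9 / (100 * k) := by
  unfold collisionWeight; field_simp

lemma mul_edgeWeight (hn : 0 < n) (hΔ : 0 < Δ) :
    (n * Δ : ℕ) * edgeWeight k n Δ = 3 / (7 * (k + 1)) := by
  unfold edgeWeight; push_cast; field_simp

lemma collisionWeight_le (hk : 2 ≤ k) (hn : 0 < n) : collisionWeight k n ≤ 9 / 200 := by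
  have hk' : (2 : ℝ) ≤ k := by exact_mod_cast hk
  have hn' : (1 : ℝ) ≤ n := by exact_mod_cast hn
  unfold collisionWeight
  rw [div_le_div_iff₀ (by positivity) (by norm_num)]
  nlinarith

lemma edgeWeight_le (hn : 0 < n) (hΔ : 0 < Δ) : edgeWeight k n Δ ≤ 3 / 7 := by
  have hn' : (1 : ℝ) ≤ n := by exact_mod_cast hn
  have hΔ' : (1 : ℝ) ≤ Δ := by exact_mod_cast hΔ
  unfold edgeWeight
  rw [div_le_div_iff₀ (by positivity) (by norm_num)]
  nlinarith [mul_le_mul hn' hΔ' zero_le_one (by positivity), (Nat.cast_nonneg k : (0 : ℝ) ≤ k)]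

lemma one_le_collisionWeight_mul (hk : 2 ≤ k) (hn : 0 < n) (hΔ : 0 < Δ)
    (hN : 10 * k ^ 2 * n * Δ ≤ N) {g₁ g₂ : ℕ} (hg₁ : g₁ ≤ n * 2) (hg₂ : g₂ ≤ n * Δ * 3) :
    1 ≤ N * collisionWeight k n *
      ((1 - collisionWeight k n) ^ g₁ * (1 - edgeWeight k n Δ) ^ g₂) := by
  have hk' : (2 : ℝ) ≤ k := by exact_mod_cast hk
  have hΔ' : (1 : ℝ) ≤ Δ := by exact_mod_cast hΔ
  have hnα : (n : ℝ) * collisionWeight k n ≤ 9 / 200 := by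
    rw [mul_collisionWeight (by omega) hn, div_le_div_iff₀ (by positivity) (by norm_num)]
    linarith
  have hnΔβ : ((n * Δ : ℕ) : ℝ) * edgeWeight k n Δ ≤ 1 / 7 := by
    rw [mul_edgeWeight hn hΔ, div_le_div_iff₀ (by positivity) (by norm_num)]
    linarith
  have h₁ : (191 / 200 : ℝ) ^ 2 ≤ (1 - collisionWeight k n) ^ g₁ :=
    le_trans (pow_le_pow_left₀ (by norm_num) (by linarith) 2)
      (one_sub_mul_pow_le_one_sub_pow collisionWeight_nonneg
        (by linarith [collisionWeight_le hk hn]) (by linarith) hg₁)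
  have h₂ : (6 / 7 : ℝ) ^ 3 ≤ (1 - edgeWeight k n Δ) ^ g₂ :=
    le_trans (pow_le_pow_left₀ (by norm_num) (by linarith) 3)
      (one_sub_mul_pow_le_one_sub_pow edgeWeight_nonneg
        (by linarith [edgeWeight_le hn hΔ (k := k)]) (by linarith) hg₂)
  have hNα : 9 / 5 ≤ N * collisionWeight k n :=
    calc (9 / 5 : ℝ) ≤ 9 * k * Δ / 10 := by nlinarith
      _ = (10 * k ^ 2 * n * Δ : ℕ) * collisionWeight k n := by
        unfold collisionWeight; push_cast; field_simp; ring
      _ ≤ N * collisionWeight k n := by gcongr; exact collisionWeight_nonneg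
  calc (1 : ℝ) ≤ 9 / 5 * ((191 / 200) ^ 2 * (6 / 7) ^ 3) := by norm_num
    _ ≤ _ := by gcongr

lemma le_one_sub_edgeWeight_pow (hk : 2 ≤ k) (hn : 0 < n) (hΔ : 0 < Δ) {m g : ℕ}
    (hm : k * m ≤ n * Δ) (hg : g ≤ n * Δ * (k + 1) + m * (k + 1)) :
    4 / 7 * (11 / 14) ≤ (1 - edgeWeight k n Δ) ^ g := by
  have hk' : (2 : ℝ) ≤ k := by exact_mod_cast hk
  have hn' : (0 : ℝ) < n := by exact_mod_cast hn
  have hΔ' : (0 : ℝ) < Δ := by exact_mod_cast hΔ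
  have hm' : (k * m : ℝ) ≤ n * Δ := by exact_mod_cast hm
  have hβ1 := edgeWeight_le hn hΔ (k := k)
  have hβ0 : 0 ≤ edgeWeight k n Δ := edgeWeight_nonneg
  have hβ : ((n * Δ * (k + 1) : ℕ) : ℝ) * edgeWeight k n Δ = 3 / 7 := by
    unfold edgeWeight; push_cast; field_simp
  have hβm : ((m * (k + 1) : ℕ) : ℝ) * edgeWeight k n Δ ≤ 3 / 14 := by
    have : ((m * (k + 1) : ℕ) : ℝ) * edgeWeight k n Δ = 3 * m / (7 * (n * Δ)) := by
      unfold edgeWeight; push_cast; field_simp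
    rw [this, div_le_div_iff₀ (by positivity) (by norm_num)]
    nlinarith
  have ha := one_sub_mul_pow_le_one_sub_pow (m := n * Δ * (k + 1)) (r := 1)
    (g := n * Δ * (k + 1)) hβ0 (by linarith) (by linarith) (by simp)
  have hb := one_sub_mul_pow_le_one_sub_pow (m := m * (k + 1)) (r := 1) (g := m * (k + 1))
    hβ0 (by linarith) (by linarith) (by simp)
  rw [pow_one, hβ] at ha
  rw [pow_one] at hb
  calc 4 / 7 * (11 / 14) ≤ (1 - edgeWeight k n Δ) ^ (n * Δ * (k + 1)) *
        (1 - edgeWeight k n Δ) ^ (m * (k + 1)) :=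
        mul_le_mul (by linarith) (by linarith) (by norm_num) (by positivity)
    _ = (1 - edgeWeight k n Δ) ^ (n * Δ * (k + 1) + m * (k + 1)) := (pow_add _ _ _).symm
    _ ≤ _ := pow_le_pow_of_le_one (by linarith) (by linarith) hg

lemma le_edgeWeight_mul (hk : 2 ≤ k) (hn : 0 < n) (hΔ : 0 < Δ)
    (hN : 10 * k ^ 2 * n * Δ ≤ N) {m g₁ g₂ : ℕ} (hm : k * m ≤ n * Δ)
    (hg₁ : g₁ ≤ n * (k + 1)) (hg₂ : g₂ ≤ n * Δ * (k + 1) + m * (k + 1)) :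
    k ≤ N * edgeWeight k n Δ *
      ((1 - collisionWeight k n) ^ g₁ * (1 - edgeWeight k n Δ) ^ g₂) := by
  have hk' : (2 : ℝ) ≤ k := by exact_mod_cast hk
  have hα : ((n * (k + 1) : ℕ) : ℝ) * collisionWeight k n ≤ 27 / 200 := by
    have : ((n * (k + 1) : ℕ) : ℝ) * collisionWeight k n = 9 * (k + 1) / (100 * k) := by
      unfold collisionWeight; push_cast; field_simp
    rw [this, div_le_div_iff₀ (by positivity) (by norm_num)]
    linarith
  have h₁ : 173 / 200 ≤ (1 - collisionWeight k n) ^ g₁ := by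
    have := one_sub_mul_pow_le_one_sub_pow (m := n * (k + 1)) (r := 1) collisionWeight_nonneg
      (by linarith [collisionWeight_le hk hn]) (by linarith) (by simpa using hg₁)
    rw [pow_one] at this
    linarith
  have h₂ := le_one_sub_edgeWeight_pow hk hn hΔ hm hg₂
  have hNβ : 20 / 7 * k ≤ N * edgeWeight k n Δ :=
    calc (20 / 7 * k : ℝ) ≤ 30 * k ^ 2 / (7 * (k + 1)) := by
          rw [le_div_iff₀ (by positivity)]; nlinarith
      _ = (10 * k ^ 2 * n * Δ : ℕ) * edgeWeight k n Δ := by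
        unfold edgeWeight; push_cast; field_simp; ring
      _ ≤ N * edgeWeight k n Δ :=
        mul_le_mul_of_nonneg_right (by exact_mod_cast hN) edgeWeight_nonneg
  calc (k : ℝ) ≤ 20 / 7 * k * (173 / 200 * (4 / 7 * (11 / 14))) := by nlinarith
    _ ≤ _ := mul_le_mul hNβ (mul_le_mul h₁ h₂ (by norm_num) (by positivity)) (by norm_num)
        (by linarith)

end Weights

section Embedding

open Function

lemma le_mul_of_mul_le_of_le_mul {a c y M N : ℝ} (hN : 0 < N) (hM : 0 ≤ M)
    (ha : a * N ≤ c * M) (hc : c ≤ N * y) : a ≤ y * M := by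
  refine le_of_mul_le_mul_right (ha.trans ?_) hN
  calc c * M ≤ N * y * M := mul_le_mul_of_nonneg_right hc hM
    _ = y * M * N := by ring

variable {V : Type*} {N k Δ : ℕ}

/-- Bad events are indexed by pairs of vertices (`φ` identifies them) and by pairs `(e, w)` of an
edge and a vertex outside it (`φ w ∈ f (φ e)`). -/
abbrev BadIndex (V : Type*) := Finset V ⊕ (Finset V × V)

noncomputable def badWeight (k n Δ : ℕ) : BadIndex V → ℝ :=
  Sum.elim (fun _ => collisionWeight k n) fun _ => edgeWeight k n Δ

lemma badWeight_nonneg {n : ℕ} (i : BadIndex V) : 0 ≤ badWeight k n Δ i :=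
  i.rec (fun _ => collisionWeight_nonneg) fun _ => edgeWeight_nonneg

lemma badWeight_lt_one {n : ℕ} (hk : 2 ≤ k) (hn : 0 < n) (hΔ : 0 < Δ) (i : BadIndex V) :
    badWeight k n Δ i < 1 :=
  i.rec (fun _ => (collisionWeight_le hk hn).trans_lt (by norm_num))
    fun _ => (edgeWeight_le hn hΔ).trans_lt (by norm_num)

lemma prod_one_sub_badWeight (n : ℕ) (s : Finset (BadIndex V)) :
    ∏ j ∈ s, (1 - badWeight k n Δ j) =
      (1 - collisionWeight k n) ^ #s.toLeft * (1 - edgeWeight k n Δ) ^ #s.toRight := by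
  simp [prod_sum_eq_prod_toLeft_mul_prod_toRight, badWeight]

variable [Fintype V] [DecidableEq V]

def badVars : BadIndex V → Finset V := Sum.elim id fun q => insert q.2 q.1

def badIndices (E : Finset (Finset V)) : Finset (BadIndex V) :=
  ({p : Finset V | #p = 2} : Finset _).disjSum {q ∈ E ×ˢ univ | q.2 ∉ q.1}

open Classical in
/-- Off `k`-sets `f` is replaced by `∅`, as the hypothesis on `f` bounds its size only on
`k`-sets. -/
def badEvent (k : ℕ) (f : Finset (Fin N) → Finset (Fin N)) :
    BadIndex V → Finset (V → Fin N) :=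
  Sum.elim (fun p => ({φ | ¬ Set.InjOn φ p} : Finset (V → Fin N)))
    fun q => ({φ | φ q.2 ∈ if #(q.1.image φ) = k then f (q.1.image φ) else ∅} : Finset _)

def badNeighbors (E : Finset (Finset V)) (i : BadIndex V) : Finset (BadIndex V) :=
  {j ∈ badIndices E | ¬Disjoint (badVars i) (badVars j)}

variable (f : Finset (Fin N) → Finset (Fin N)) (E : Finset (Finset V))

lemma dependsOn_mem_badEvent (i : BadIndex V) :
    DependsOn (· ∈ badEvent k f i) (badVars i : Set V) := by
  rcases i with p | ⟨e, w⟩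
  · intro φ ψ h
    have hφψ : Set.EqOn φ ψ p := fun v hv => h v hv
    simp only [badEvent, Sum.elim_inl, mem_filter, mem_univ, true_and, hφψ.injOn_iff]
  · intro φ ψ h
    have himage : e.image φ = e.image ψ := image_congr fun v hv => h v (by simp [badVars, hv])
    simp only [badEvent, Sum.elim_inr, mem_filter, mem_univ, true_and, himage,
      h w (by simp [badVars])]

lemma card_badEvent_inl_mul_le {p : Finset V} (hp : #p = 2) :
    #(badEvent k f (.inl p)) * N ≤ Fintype.card (V → Fin N) := by
  obtain ⟨u, v, huv, rfl⟩ := card_eq_two.1 hp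
  have hF : DependsOn (fun φ : V → Fin N => ({φ u} : Finset (Fin N))) ({v}ᶜ : Set V) :=
    fun φ ψ h => by dsimp only; rw [h u huv]
  have hevent : badEvent k f (.inl {u, v}) =
      ({φ : V → Fin N | φ v ∈ ({φ u} : Finset _)} : Finset _) := by
    ext φ; simp [badEvent, huv, eq_comm]
  rw [hevent]
  simpa only [Fintype.card_fin, one_mul] using
    card_filter_apply_mem_mul_le v hF fun φ => (card_singleton (φ u)).le

lemma card_badEvent_inr_mul_le (hf : ∀ s : Finset (Fin N), #s = k → #(f s) ≤ k)
    {e : Finset V} {w : V} (hw : w ∉ e) :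
    #(badEvent k f (.inr (e, w))) * N ≤ k * Fintype.card (V → Fin N) := by
  have hF : DependsOn (fun φ : V → Fin N => if #(e.image φ) = k then f (e.image φ) else ∅)
      ({w}ᶜ : Set V) := fun φ ψ h => by
    dsimp only
    rw [image_congr fun v hv => h v fun hvw => hw (Set.mem_singleton_iff.1 hvw ▸ hv)]
  simpa [badEvent] using card_filter_apply_mem_mul_le w hF fun φ => by
    split_ifs with h
    exacts [hf _ h, by simp]

lemma card_filter_card_eq_two_mem_le (v : V) :
    #{p : Finset V | #p = 2 ∧ v ∈ p} ≤ Fintype.card V := by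
  calc #{p : Finset V | #p = 2 ∧ v ∈ p} ≤ #(univ.image fun w => ({v, w} : Finset V)) := by
        refine card_le_card fun p hp => ?_
        obtain ⟨⟨a, b, -, rfl⟩, hv⟩ := (mem_filter.1 hp).2.imp_left card_eq_two.1
        rcases mem_insert.1 hv with rfl | hv
        · exact mem_image_of_mem _ (mem_univ b)
        · rw [mem_singleton.1 hv, pair_comm]; exact mem_image_of_mem _ (mem_univ a)
    _ ≤ Fintype.card V := card_image_le

lemma card_toLeft_badNeighbors_le (i : BadIndex V) :
    #(badNeighbors E i).toLeft ≤ #(badVars i) * Fintype.card V := by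
  calc #(badNeighbors E i).toLeft
      ≤ #((badVars i).biUnion fun v => ({p : Finset V | #p = 2 ∧ v ∈ p} : Finset _)) := by
        refine card_le_card fun p hp => ?_
        simp only [mem_toLeft, badNeighbors, badIndices, mem_filter, inl_mem_disjSum,
          mem_univ, true_and, not_disjoint_iff] at hp
        obtain ⟨hp, v, hvi, hvp⟩ := hp
        exact mem_biUnion.2 ⟨v, hvi, mem_filter.2 ⟨mem_univ _, hp, hvp⟩⟩
    _ ≤ ∑ v ∈ badVars i, #{p : Finset V | #p = 2 ∧ v ∈ p} := card_biUnion_le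
    _ ≤ #(badVars i) * Fintype.card V :=
        sum_le_card_nsmul _ _ _ fun v _ => card_filter_card_eq_two_mem_le v

lemma card_toRight_badNeighbors_le (hdeg : ∀ v, #{e ∈ E | v ∈ e} ≤ Δ) (i : BadIndex V) :
    #(badNeighbors E i).toRight ≤ #(badVars i) * (Fintype.card V * Δ + #E) := by
  calc #(badNeighbors E i).toRight
      ≤ #((badVars i).biUnion fun v => {e ∈ E | v ∈ e} ×ˢ univ ∪ E ×ˢ {v}) := by
        refine card_le_card fun q hq => ?_
        simp only [mem_toRight, badNeighbors, badIndices, mem_filter, inr_mem_disjSum,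
          mem_product, mem_univ, and_true, not_disjoint_iff, badVars, Sum.elim_inr,
          mem_insert] at hq
        obtain ⟨⟨hqE, -⟩, v, hvi, hvq⟩ := hq
        refine mem_biUnion.2 ⟨v, hvi, ?_⟩
        rcases hvq with rfl | hvq
        · exact mem_union_right _ (mem_product.2 ⟨hqE, mem_singleton_self _⟩)
        · exact mem_union_left _ (mem_product.2 ⟨mem_filter.2 ⟨hqE, hvq⟩, mem_univ _⟩)
    _ ≤ ∑ v ∈ badVars i, #({e ∈ E | v ∈ e} ×ˢ univ ∪ E ×ˢ {v}) := card_biUnion_le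
    _ ≤ #(badVars i) * (Fintype.card V * Δ + #E) := by
        refine sum_le_card_nsmul _ _ _ fun v _ => (card_union_le _ _).trans ?_
        rw [card_product, card_product, card_univ, card_singleton, mul_one, mul_comm]
        gcongr
        exact hdeg v

lemma mul_card_le_card_mul (hunif : ∀ e ∈ E, #e = k) (hdeg : ∀ v, #{e ∈ E | v ∈ e} ≤ Δ) :
    k * #E ≤ Fintype.card V * Δ := by
  rw [mul_comm, ← sum_const_nat hunif]
  exact sum_card_le hdeg

lemma card_badEvent_le (hk : 2 ≤ k) (hn : 0 < Fintype.card V) (hΔ : 0 < Δ)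
    (hN : 10 * k ^ 2 * Fintype.card V * Δ ≤ N) (hunif : ∀ e ∈ E, #e = k)
    (hdeg : ∀ v, #{e ∈ E | v ∈ e} ≤ Δ) (hf : ∀ s : Finset (Fin N), #s = k → #(f s) ≤ k)
    {i : BadIndex V} (hi : i ∈ badIndices E) :
    (#(badEvent k f i) : ℝ) ≤ badWeight k (Fintype.card V) Δ i *
      (∏ j ∈ badNeighbors E i, (1 - badWeight k (Fintype.card V) Δ j)) *
        Fintype.card (V → Fin N) := by
  have hNpos : (0 : ℝ) < N := by
    have : 0 < 10 * k ^ 2 * Fintype.card V * Δ := by positivity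
    exact_mod_cast this.trans_le hN
  have hE := mul_card_le_card_mul E hunif hdeg
  have h2E : 2 * #E ≤ k * #E := Nat.mul_le_mul_right _ hk
  have hg₁ := card_toLeft_badNeighbors_le E i
  have hg₂ := card_toRight_badNeighbors_le E hdeg i
  rw [prod_one_sub_badWeight]
  rcases i with p | ⟨e, w⟩
  · simp only [badIndices, inl_mem_disjSum, mem_filter, mem_univ, true_and] at hi
    simp only [badVars, Sum.elim_inl, id, hi] at hg₁ hg₂
    refine le_mul_of_mul_le_of_le_mul (c := 1) hNpos (Nat.cast_nonneg _)
      (by rw [one_mul]; exact_mod_cast card_badEvent_inl_mul_le f hi) ?_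
    rw [badWeight, Sum.elim_inl, ← mul_assoc]
    exact one_le_collisionWeight_mul hk hn hΔ hN (by linarith) (by nlinarith)
  · simp only [badIndices, inr_mem_disjSum, mem_filter, mem_product, mem_univ, and_true] at hi
    have hvars : #(badVars (.inr (e, w))) = k + 1 := by
      rw [badVars, Sum.elim_inr, card_insert_of_notMem hi.2, hunif e hi.1]
    rw [hvars] at hg₁ hg₂
    refine le_mul_of_mul_le_of_le_mul (c := k) hNpos (Nat.cast_nonneg _)
      (by exact_mod_cast card_badEvent_inr_mul_le f hf hi.2) ?_
    rw [badWeight, Sum.elim_inr, ← mul_assoc]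
    exact le_edgeWeight_mul hk hn hΔ hN hE (by linarith) (by linarith)

variable {f E}

lemma injective_of_mem_avoiding {φ : V → Fin N}
    (hφ : φ ∈ avoiding (badEvent k f) (badIndices E)) : Injective φ := by
  intro u v huv
  by_contra hne
  refine mem_avoiding.1 hφ (.inl {u, v}) (by simp [badIndices, card_pair hne]) ?_
  simp [badEvent, huv, hne]

lemma disjoint_image_of_mem_avoiding (hunif : ∀ e ∈ E, #e = k)
    (hf : ∀ s : Finset (Fin N), #s = k → Disjoint (f s) s) {φ : V → Fin N}
    (hφ : φ ∈ avoiding (badEvent k f) (badIndices E)) {e : Finset V} (he : e ∈ E) :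
    Disjoint (f (e.image φ)) (univ.image φ) := by
  have hcard : #(e.image φ) = k := by
    rw [card_image_of_injective _ (injective_of_mem_avoiding hφ), hunif e he]
  refine disjoint_right.2 fun a ha hfa => ?_
  obtain ⟨w, -, rfl⟩ := mem_image.1 ha
  by_cases hw : w ∈ e
  · exact disjoint_left.1 (hf _ hcard) hfa (mem_image_of_mem φ hw)
  · refine mem_avoiding.1 hφ (.inr (e, w)) (by simp [badIndices, he, hw]) ?_
    simp [badEvent, hcard, hfa]

theorem exists_injective_forall_disjoint_image (hk : 2 ≤ k) (hkV : k ≤ Fintype.card V)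
    (hΔ : 0 < Δ) (hN : 10 * k ^ 2 * Fintype.card V * Δ ≤ N) (hunif : ∀ e ∈ E, #e = k)
    (hdeg : ∀ v, #{e ∈ E | v ∈ e} ≤ Δ)
    (hf : ∀ s : Finset (Fin N), #s = k → #(f s) ≤ k ∧ Disjoint (f s) s) :
    ∃ φ : V → Fin N, Injective φ ∧ ∀ e ∈ E, Disjoint (f (e.image φ)) (univ.image φ) := by
  have hn : 0 < Fintype.card V := by omega
  have : Nonempty (Fin N) := ⟨⟨0, lt_of_lt_of_le (by positivity) hN⟩⟩
  obtain ⟨φ, hφ⟩ := avoiding_nonempty_of_dependsOn (dependsOn_mem_badEvent f)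
    (Γ := badNeighbors E) (fun i _ j hj hij => mem_filter.2 ⟨hj, hij⟩)
    (badWeight k (Fintype.card V) Δ)
    badWeight_nonneg (badWeight_lt_one hk hn hΔ)
    fun i hi => card_badEvent_le f E hk hn hΔ hN hunif hdeg (fun s hs => (hf s hs).1) hi
  exact ⟨φ, injective_of_mem_avoiding hφ,
    fun e he => disjoint_image_of_mem_avoiding hunif (fun s hs => (hf s hs).2) hφ he⟩

end Embedding

/-- Let `G` be a `k`-uniform hypergraph (`k ≥ 2`) with `n` vertices
and maximum degree `Δ ≥ 1`, and set `N = 10k²nΔ`. For every `f` mapping `k`-sets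
of `[N]` to `k`-sets of `[N]` with `f(e) ∩ e = ∅`, there is an injective
`φ : V(G) → [N]` such that `f(φ(e))` avoids `φ(V(G))` for every edge `e`. -/
theorem stmt4 {V : Type*} [Fintype V] [DecidableEq V]
    (k n Δ N : ℕ) (hk : 2 ≤ k) (hΔ : 1 ≤ Δ) (hn : n = Fintype.card V)
    (E : Finset (Finset V)) (hunif : ∀ e ∈ E, e.card = k)
    (hdeg : Δ = Finset.univ.sup (fun v : V => (E.filter (fun e => v ∈ e)).card))
    (hN : N = 10 * k ^ 2 * n * Δ)
    (f : Finset (Fin N) → Finset (Fin N))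
    (hf : ∀ e : Finset (Fin N), e.card = k → (f e).card = k ∧ Disjoint (f e) e) :
    ∃ φ : V → Fin N, Function.Injective φ ∧
      ∀ e ∈ E, Disjoint (f (e.image φ)) (Finset.univ.image φ) := by
  subst hn
  have hdeg' (v : V) : #{e ∈ E | v ∈ e} ≤ Δ := hdeg ▸ le_sup (f := fun v => #{e ∈ E | v ∈ e})
    (mem_univ v)
  obtain ⟨v, -, hv⟩ := Finset.lt_sup_iff.1 (hdeg ▸ hΔ : 0 < univ.sup fun v => #{e ∈ E | v ∈ e})
  obtain ⟨e, he⟩ := card_pos.1 hv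
  have hkV : k ≤ Fintype.card V := hunif e (mem_filter.1 he).1 ▸ card_le_univ e
  exact exists_injective_forall_disjoint_image hk hkV hΔ hN.ge hunif hdeg'
    fun s hs => ⟨(hf s hs).1.le, (hf s hs).2⟩
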